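/- arXiv:2107.05804 — 3 statements merged into one kernel-verified Lean document; each statement's English description precedes it below -/
import Mathlib

section
/- Let E be a finite-dimensional real inner product space and let L : E → ℝ be twice continuously differentiable. For a step size η > 0 and a point θ ∈ E, define the alternative training step G(η, θ) = θ' + η ∇L(θ') where θ' = θ − η ∇L(θ) (one gradient descent step followed by one gradient ascent step with the same learning rate η). Let g : E → ℝ be defined by g(θ) = ‖∇L(θ)‖². Then for each fixed θ, as η → 0 one has G(η, θ) = θ − (η²/2) ∇g(θ) + o(η²); that is, the map η ↦ (G(η, θ) − θ + (η²/2) ∇g(θ)) / η² tends to 0 as η → 0. In other words, one alternating descent–ascent step agrees, up to error o(η²), with one gradient descent step on the squared gradient norm ‖∇L‖² with learning rate η²/2. -/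
/-!
With `θ' = θ - η ∇L(θ)` one has `G η θ - θ = η (∇L(θ') - ∇L(θ))`, and differentiating `∇L` along
the descent line gives `∇L(θ') = ∇L(θ) - η H ∇L(θ) + o(η)`, `H` the Hessian at `θ`; hence
`G η θ = θ - η² H ∇L(θ) + o(η²)`, which holds for any differentiable vector field in place of `∇L`.
Since `H` is symmetric (Schwarz), `∇‖∇L‖²(θ) = 2 H ∇L(θ)`, so `η² H ∇L(θ) = (η²/2) ∇g(θ)`.
-/

open Filter Topology InnerProductSpace

section Gradient

variable {E : Type*} [NormedAddCommGroup E] [InnerProductSpace ℝ E] [CompleteSpace E]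

theorem gradient_eq_toDual_symm_comp_fderiv (L : E → ℝ) :
    gradient L = (toDual ℝ E).symm ∘ fderiv ℝ L :=
  rfl

theorem ContDiff.gradient_right {L : E → ℝ} {m n : WithTop ℕ∞} (hL : ContDiff ℝ n L)
    (hmn : m + 1 ≤ n) : ContDiff ℝ m (gradient L) := by
  rw [gradient_eq_toDual_symm_comp_fderiv]
  exact (toDual ℝ E).symm.contDiff.comp (hL.fderiv_right hmn)

theorem inner_fderiv_gradient_apply (L : E → ℝ) (θ v w : E) :
    ⟪fderiv ℝ (gradient L) θ v, w⟫_ℝ = fderiv ℝ (fderiv ℝ L) θ v w := by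
  rw [gradient_eq_toDual_symm_comp_fderiv, LinearIsometryEquiv.comp_fderiv]
  exact toDual_symm_apply

theorem IsSymmSndFDerivAt.isSymmetric_fderiv_gradient {L : E → ℝ} {θ : E}
    (hL : IsSymmSndFDerivAt ℝ L θ) :
    ((fderiv ℝ (gradient L) θ : E →L[ℝ] E) : E →ₗ[ℝ] E).IsSymmetric := by
  intro v w
  change ⟪fderiv ℝ (gradient L) θ v, w⟫_ℝ = ⟪v, fderiv ℝ (gradient L) θ w⟫_ℝ
  rw [real_inner_comm (fderiv ℝ (gradient L) θ w), inner_fderiv_gradient_apply,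
    inner_fderiv_gradient_apply, hL v w]

end Gradient

theorem HasFDerivAt.hasGradientAt_norm_sq_of_isSymmetric
    {E : Type*} [NormedAddCommGroup E] [InnerProductSpace ℝ E] [CompleteSpace E]
    {F : E → E} {T : E →L[ℝ] E} {θ : E} (hF : HasFDerivAt F T θ)
    (hT : (T : E →ₗ[ℝ] E).IsSymmetric) :
    HasGradientAt (‖F ·‖ ^ 2) ((2 : ℝ) • T (F θ)) θ := by
  rw [hasGradientAt_iff_hasFDerivAt]
  refine hF.norm_sq.congr_fderiv (ContinuousLinearMap.ext fun w => ?_)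
  simpa using (hT (F θ) w).symm

theorem HasFDerivAt.tendsto_descent_ascent_step
    {E : Type*} [NormedAddCommGroup E] [NormedSpace ℝ E]
    {F : E → E} {T : E →L[ℝ] E} {θ : E} (hF : HasFDerivAt F T θ) :
    Tendsto (fun η : ℝ => (η ^ 2)⁻¹ •
        ((θ - η • F θ) + η • F (θ - η • F θ) - θ + η ^ 2 • T (F θ)))
      (𝓝[≠] 0) (𝓝 0) := by
  have hline : HasDerivAt (fun η : ℝ => F (θ - η • F θ)) (-T (F θ)) 0 := by
    have hdescent : HasDerivAt (fun η : ℝ => θ - η • F θ) (-F θ) 0 := by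
      simpa using ((hasDerivAt_id (0 : ℝ)).smul_const (F θ)).const_sub θ
    have hF₀ : HasFDerivAt F T (θ - (0 : ℝ) • F θ) := by simpa using hF
    simpa [Function.comp_def] using hF₀.comp_hasDerivAt 0 hdescent
  have hslope : Tendsto (fun η : ℝ => η⁻¹ • (F (θ - η • F θ) - F θ) + T (F θ))
      (𝓝[≠] 0) (𝓝 (-T (F θ) + T (F θ))) := by
    refine (hasDerivAt_iff_tendsto_slope.1 hline).add_const _ |>.congr fun η => ?_
    simp [slope_fun_def]
  rw [neg_add_cancel] at hslope
  refine hslope.congr' ?_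
  filter_upwards [self_mem_nhdsWithin] with η (hη : η ≠ 0)
  rw [eq_inv_smul_iff₀ (pow_ne_zero 2 hη)]
  match_scalars <;> field_simp
  ring

/-- One alternating descent–ascent step `G η θ = θ' + η ∇L(θ')` with
`θ' = θ - η ∇L(θ)` agrees, up to `o(η²)`, with one gradient descent step
on `g = ‖∇L‖²` with learning rate `η²/2`. -/
theorem alterSGD_step_approx_gradient_descent_on_sq_grad_norm
    {E : Type*} [NormedAddCommGroup E] [InnerProductSpace ℝ E]
    [FiniteDimensional ℝ E]
    (L : E → ℝ) (hL : ContDiff ℝ 2 L)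
    (G : ℝ → E → E)
    (hG : ∀ η θ, G η θ =
      (θ - η • gradient L θ) + η • gradient L (θ - η • gradient L θ))
    (g : E → ℝ) (hg : ∀ θ, g θ = ‖gradient L θ‖ ^ 2)
    (θ : E) :
    Tendsto (fun η : ℝ =>
        (η ^ 2)⁻¹ • (G η θ - θ + (η ^ 2 / 2) • gradient g θ))
      (𝓝[>] (0 : ℝ)) (𝓝 (0 : E)) := by
  have hH : HasFDerivAt (gradient L) (fderiv ℝ (gradient L) θ) θ :=
    ((hL.gradient_right (by norm_num)).differentiable one_ne_zero).differentiableAt.hasFDerivAt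
  have hsymm :=
    (hL.contDiffAt (x := θ) |>.isSymmSndFDerivAt (by simp)).isSymmetric_fderiv_gradient
  have hgrad : gradient g θ = (2 : ℝ) • fderiv ℝ (gradient L) θ (gradient L θ) := by
    rw [show g = (‖gradient L ·‖ ^ 2) from funext hg]
    exact (hH.hasGradientAt_norm_sq_of_isSymmetric hsymm).gradient
  refine (hH.tendsto_descent_ascent_step.mono_left (nhdsWithin_mono _ fun _ h => ne_of_gt h)).congr
    fun η => ?_
  rw [hG, hgrad, smul_smul, div_mul_cancel₀ _ two_ne_zero]
end

section
/- Let E be a finite-dimensional real inner product space and let L : E → ℝ be twice differentiable with the derivative of ∇L (the Hessian map θ ↦ ∇²L(θ)) Lipschitz continuous with constant K ≥ 0 in the operator norm. For η > 0 and θ ∈ E, define the alternative training step G(η, θ) = θ' + η ∇L(θ') with θ' = θ − η ∇L(θ), and let g(θ) = ‖∇L(θ)‖². Then for all η > 0 and all θ ∈ E, the deviation of the alternating step from an exact gradient step on g is bounded by ‖G(η, θ) − (θ − (η²/2) ∇g(θ))‖ ≤ (K/2) η³ ‖∇L(θ)‖². -/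
/-!
After the descent step `θ' = θ - η u` with `u = ∇L(θ)`, the ascent step adds `η ∇L(θ')`, so
`G(η, θ) - θ = η (∇L(θ - η u) - ∇L(θ))`. The Hessian `H = ∇²L(θ)` is self-adjoint, hence
`∇g(θ) = 2 H u`, and the deviation from the gradient step on `g` is `η` times the first-order
Taylor remainder of `∇L` at `θ` in the direction `-η u`. Since `∇²L` is `K`-Lipschitz, that
remainder is at most `(K/2) ‖η u‖²`.
-/

open InnerProductSpace ContinuousLinearMap

theorem norm_sub_sub_fderiv_le_of_lipschitz_fderiv
    {E F : Type*} [NormedAddCommGroup E] [NormedSpace ℝ E]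
    [NormedAddCommGroup F] [NormedSpace ℝ F]
    {f : E → F} (hf : Differentiable ℝ f) {K : ℝ}
    (hLip : ∀ x y, ‖fderiv ℝ f x - fderiv ℝ f y‖ ≤ K * ‖x - y‖) (x v : E) :
    ‖f (x + v) - f x - fderiv ℝ f x v‖ ≤ K / 2 * ‖v‖ ^ 2 := by
  let φ : ℝ → F := fun t => f (x + t • v) - f x - t • fderiv ℝ f x v
  have hφ : ∀ t, HasDerivAt φ (fderiv ℝ f (x + t • v) v - fderiv ℝ f x v) t := by
    intro t
    have hline : HasDerivAt (fun t : ℝ => x + t • v) v t := by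
      simpa using ((hasDerivAt_id t).smul_const v).const_add x
    have hcomp := (hf _).hasFDerivAt.comp_hasDerivAt t hline
    have h := (hcomp.sub_const (f x)).sub ((hasDerivAt_id t).smul_const (fderiv ℝ f x v))
    rwa [one_smul] at h
  have hφ' : ∀ t ∈ Set.Ico (0 : ℝ) 1,
      ‖fderiv ℝ f (x + t • v) v - fderiv ℝ f x v‖ ≤ K * ‖v‖ ^ 2 * t := by
    intro t ht
    calc ‖fderiv ℝ f (x + t • v) v - fderiv ℝ f x v‖
        ≤ ‖fderiv ℝ f (x + t • v) - fderiv ℝ f x‖ * ‖v‖ :=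
          (fderiv ℝ f (x + t • v) - fderiv ℝ f x).le_opNorm v
      _ ≤ K * ‖t • v‖ * ‖v‖ := by
          gcongr
          simpa using hLip (x + t • v) x
      _ = K * ‖v‖ ^ 2 * t := by
          rw [norm_smul, Real.norm_of_nonneg ht.1]
          ring
  -- Comparing with this quadratic barrier, rather than applying the mean value bound, yields `K / 2`.
  have hbound : ∀ t, HasDerivAt (fun t => K / 2 * ‖v‖ ^ 2 * t ^ 2) (K * ‖v‖ ^ 2 * t) t :=
    fun t => ((hasDerivAt_pow 2 t).const_mul (K / 2 * ‖v‖ ^ 2)).congr_deriv (by push_cast; ring)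
  have h := image_norm_le_of_norm_deriv_right_le_deriv_boundary
    (fun t _ => (hφ t).continuousAt.continuousWithinAt) (fun t _ => (hφ t).hasDerivWithinAt)
    (by simp [φ]) hbound hφ' (Set.right_mem_Icc.2 zero_le_one)
  simpa [φ] using h

section

variable {E : Type*} [NormedAddCommGroup E] [InnerProductSpace ℝ E] [CompleteSpace E]

theorem HasFDerivAt.hasGradientAt_norm_sq
    {F : Type*} [NormedAddCommGroup F] [InnerProductSpace ℝ F] [CompleteSpace F]
    {f : E → F} {f' : E →L[ℝ] F} {x : E} (hf : HasFDerivAt f f' x) :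
    HasGradientAt (fun y => ‖f y‖ ^ 2) ((2 : ℝ) • adjoint f' (f x)) x := by
  rw [hasGradientAt_iff_hasFDerivAt]
  refine hf.norm_sq.congr_fderiv ?_
  ext v
  simp [adjoint_inner_left, two_smul]

theorem isSelfAdjoint_fderiv_gradient {L : E → ℝ} (hL : Differentiable ℝ L) {θ : E}
    (hL' : DifferentiableAt ℝ (gradient L) θ) :
    IsSelfAdjoint (fderiv ℝ (gradient L) θ) := by
  have hfirst : ∀ y, HasFDerivAt L ((toDual ℝ E).toContinuousLinearEquiv (gradient L y)) y := by
    intro y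
    simpa [toDual_gradient] using (hL y).hasFDerivAt
  have hsecond := (toDual ℝ E).toContinuousLinearEquiv.hasFDerivAt.comp θ hL'.hasFDerivAt
  rw [isSelfAdjoint_iff_isSymmetric]
  intro v w
  simpa [real_inner_comm] using second_derivative_symmetric hfirst hsecond v w

end

theorem alterSGD_step_dist_to_gradient_step_le_general
    {E : Type*} [NormedAddCommGroup E] [InnerProductSpace ℝ E]
    [FiniteDimensional ℝ E]
    (L : E → ℝ)
    (hL : Differentiable ℝ L)
    (hL' : Differentiable ℝ (gradient L))
    (K : ℝ)
    (hLip : ∀ x y : E,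
      ‖fderiv ℝ (gradient L) x - fderiv ℝ (gradient L) y‖ ≤ K * ‖x - y‖)
    (G : ℝ → E → E)
    (hG : ∀ η θ, G η θ =
      (θ - η • gradient L θ) + η • gradient L (θ - η • gradient L θ))
    (g : E → ℝ) (hg : ∀ θ, g θ = ‖gradient L θ‖ ^ 2) :
    ∀ η : ℝ, 0 < η → ∀ θ : E,
      ‖G η θ - (θ - (η ^ 2 / 2) • gradient g θ)‖ ≤
        (K / 2) * η ^ 3 * ‖gradient L θ‖ ^ 2 := by
  intro η hη θ
  set u := gradient L θ
  set H := fderiv ℝ (gradient L) θ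
  have hgrad_g : gradient g θ = (2 : ℝ) • H u := by
    rw [show g = fun y => ‖gradient L y‖ ^ 2 from funext hg,
      (hL' θ).hasFDerivAt.hasGradientAt_norm_sq.gradient,
      (isSelfAdjoint_fderiv_gradient hL (hL' θ)).adjoint_eq]
  have hstep : G η θ - (θ - (η ^ 2 / 2) • gradient g θ)
      = η • (gradient L (θ + (-η) • u) - gradient L θ - H ((-η) • u)) := by
    rw [hG, hgrad_g, map_smul, neg_smul, ← sub_eq_add_neg]
    module
  have htaylor := norm_sub_sub_fderiv_le_of_lipschitz_fderiv hL' hLip θ ((-η) • u)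
  rw [norm_smul, norm_neg, Real.norm_of_nonneg hη.le] at htaylor
  calc ‖G η θ - (θ - (η ^ 2 / 2) • gradient g θ)‖
      = η * ‖gradient L (θ + (-η) • u) - gradient L θ - H ((-η) • u)‖ := by
        rw [hstep, norm_smul, Real.norm_of_nonneg hη.le]
    _ ≤ η * (K / 2 * (η * ‖u‖) ^ 2) := by gcongr
    _ = K / 2 * η ^ 3 * ‖u‖ ^ 2 := by ring

/-- If `L` is twice differentiable with `K`-Lipschitz Hessian (in operator
norm), then the alternating descent–ascent step `G η θ` deviates from the
exact gradient step `θ - (η²/2) ∇g(θ)` on `g = ‖∇L‖²` by at most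
`(K/2) η³ ‖∇L(θ)‖²`. -/
theorem alterSGD_step_dist_to_gradient_step_le
    {E : Type*} [NormedAddCommGroup E] [InnerProductSpace ℝ E]
    [FiniteDimensional ℝ E]
    (L : E → ℝ)
    (hL : Differentiable ℝ L)
    (hL' : Differentiable ℝ (gradient L))
    (K : ℝ) (hK : 0 ≤ K)
    (hLip : ∀ x y : E,
      ‖fderiv ℝ (gradient L) x - fderiv ℝ (gradient L) y‖ ≤ K * ‖x - y‖)
    (G : ℝ → E → E)
    (hG : ∀ η θ, G η θ =
      (θ - η • gradient L θ) + η • gradient L (θ - η • gradient L θ))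
    (g : E → ℝ) (hg : ∀ θ, g θ = ‖gradient L θ‖ ^ 2) :
    ∀ η : ℝ, 0 < η → ∀ θ : E,
      ‖G η θ - (θ - (η ^ 2 / 2) • gradient g θ)‖ ≤
        (K / 2) * η ^ 3 * ‖gradient L θ‖ ^ 2 :=
  alterSGD_step_dist_to_gradient_step_le_general L hL hL' K hLip G hG g hg
end

section
/- Let E be a finite-dimensional real inner product space and let L : E → ℝ be twice continuously differentiable, and define g(θ) = ‖∇L(θ)‖² and the alternating step G(η, θ) = θ' + η ∇L(θ') with θ' = θ − η ∇L(θ). Fix θ ∈ E with ∇²L(θ)(∇L(θ)) ≠ 0 (equivalently ∇g(θ) ≠ 0). Then there exists η₀ > 0 such that for all η with 0 < η < η₀, one has g(G(η, θ)) < g(θ); that is, for sufficiently small learning rates, one alternating descent–ascent step strictly decreases the squared gradient norm ‖∇L‖², driving the iterates toward flatter regions of the loss landscape. -/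
/-!
Write `v = ∇L(θ)` and `A = ∇²L(θ)`. Expanding `∇L` to first order along the descent direction,
the ascent step cancels the descent step up to second order: `G(η, θ) = θ - η² A v + o(η²)`.
As `Dg(θ) = 2⟪v, A ·⟫`, this gives `g(G(η, θ)) = g(θ) - 2η² ⟪v, A A v⟫ + o(η²)`, and the
symmetry of the Hessian turns the coefficient into `-2‖A v‖² < 0`.
-/
open Filter Topology Asymptotics InnerProductSpace

section SecondOrder

variable {𝕜 E F α : Type*} [NontriviallyNormedField 𝕜] [NormedAddCommGroup E] [NormedSpace 𝕜 E]
  [NormedAddCommGroup F] [NormedSpace 𝕜 F] {f : E → F} {f' : E →L[𝕜] F} {x : E}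

theorem HasFDerivAt.isLittleO_comp {l : Filter α} {γ : α → E} {r : α → 𝕜} {u : E}
    (hf : HasFDerivAt f f' x) (hr : Tendsto r l (𝓝 0))
    (hγ : (fun a => γ a - x - r a • u) =o[l] r) :
    (fun a => f (γ a) - f x - r a • f' u) =o[l] r := by
  have hru : (fun a => r a • u) =O[l] r :=
    isBigO_of_le' (c := ‖u‖) l fun a => (norm_smul _ _).trans_le (mul_comm _ _).le
  have hγO : (fun a => γ a - x) =O[l] r :=
    (hγ.isBigO.add hru).congr_left fun a => sub_add_cancel _ _
  have hγx : Tendsto γ l (𝓝 x) := tendsto_sub_nhds_zero_iff.mp (hγO.trans_tendsto hr)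
  have hlin : (fun a => f (γ a) - f x - f' (γ a - x)) =o[l] r :=
    (hf.isLittleO.comp_tendsto hγx).trans_isBigO hγO
  refine (hlin.add ((f'.isBigO_comp _ l).trans_isLittleO hγ)).congr_left fun a => ?_
  simp only [map_sub, map_smul]
  abel

theorem HasFDerivAt.isLittleO_smul_sub_along_line (hf : HasFDerivAt f f' x) (v : E) :
    (fun η : 𝕜 => η • (f (x - η • v) - f x) + η ^ 2 • f' v) =o[𝓝 0] fun η => η ^ 2 := by
  have hline : (fun η : 𝕜 => f (x - η • v) - f x - η • f' (-v)) =o[𝓝 0] fun η => η :=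
    hf.isLittleO_comp tendsto_id (by simp)
  refine ((isBigO_refl (fun η : 𝕜 => η) _).smul_isLittleO hline).congr (fun η => ?_) (fun η => ?_)
  · simp only [map_neg, smul_neg, sub_neg_eq_add, smul_add, smul_smul, sq]
  · simp [sq]

end SecondOrder

theorem eventually_neg_of_isLittleO_sub_mul {α : Type*} {l : Filter α} {φ r : α → ℝ} {c : ℝ}
    (hc : c < 0) (hr : ∀ᶠ a in l, 0 < r a) (hφ : (fun a => φ a - r a * c) =o[l] r) :
    ∀ᶠ a in l, φ a < 0 := by
  filter_upwards [hφ.def (c := -c / 2) (by linarith), hr] with a ha hra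
  rw [Real.norm_eq_abs, Real.norm_of_nonneg hra.le] at ha
  nlinarith [le_abs_self (φ a - r a * c)]

section Gradient

variable {E : Type*} [NormedAddCommGroup E] [InnerProductSpace ℝ E] [CompleteSpace E]
  {L : E → ℝ} {θ : E}

theorem hasFDerivAt_gradient_of_contDiffAt (hL : ContDiffAt ℝ 2 L θ) :
    HasFDerivAt (gradient L)
      ((toDual ℝ E).symm.toLinearIsometry.toContinuousLinearMap ∘L fderiv ℝ (fderiv ℝ L) θ) θ := by
  have hL' : DifferentiableAt ℝ (fderiv ℝ L) θ :=
    (hL.fderiv_right (m := 1) (by norm_num)).differentiableAt one_ne_zero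
  exact (toDual ℝ E).symm.toLinearIsometry.toContinuousLinearMap.hasFDerivAt.comp θ hL'.hasFDerivAt

theorem inner_fderiv_gradient_comm (hL : ContDiffAt ℝ 2 L θ) (u z : E) :
    ⟪fderiv ℝ (gradient L) θ u, z⟫_ℝ = ⟪u, fderiv ℝ (gradient L) θ z⟫_ℝ := by
  have hsymm := (hL.isSymmSndFDerivAt (by simp)).eq u z
  rw [(hasFDerivAt_gradient_of_contDiffAt hL).fderiv, real_inner_comm _ u]
  simpa [toDual_symm_apply] using hsymm

end Gradient

/-- If `∇²L(θ)(∇L(θ)) ≠ 0`, then for all sufficiently small learning rates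
`η > 0`, one alternating descent–ascent step strictly decreases the squared
gradient norm `g = ‖∇L‖²`. -/
theorem alterSGD_step_decreases_sq_grad_norm
    {E : Type*} [NormedAddCommGroup E] [InnerProductSpace ℝ E]
    [FiniteDimensional ℝ E]
    (L : E → ℝ) (hL : ContDiff ℝ 2 L)
    (g : E → ℝ) (hg : ∀ θ, g θ = ‖gradient L θ‖ ^ 2)
    (G : ℝ → E → E)
    (hG : ∀ η θ, G η θ =
      (θ - η • gradient L θ) + η • gradient L (θ - η • gradient L θ))
    (θ : E)
    (hθ : (fderiv ℝ (gradient L) θ) (gradient L θ) ≠ 0) :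
    ∃ η₀ : ℝ, 0 < η₀ ∧ ∀ η : ℝ, 0 < η → η < η₀ → g (G η θ) < g θ := by
  set A := fderiv ℝ (gradient L) θ
  set v := gradient L θ
  have hA : HasFDerivAt (gradient L) A θ :=
    (hasFDerivAt_gradient_of_contDiffAt hL.contDiffAt).differentiableAt.hasFDerivAt
  have hstep : (fun η : ℝ => G η θ - θ - η ^ 2 • -A v) =o[𝓝 0] fun η => η ^ 2 :=
    (hA.isLittleO_smul_sub_along_line v).congr_left fun η => by rw [hG]; module
  have hg' : HasFDerivAt g (2 • innerSL ℝ v ∘L A) θ := by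
    rw [show g = fun x => ‖gradient L x‖ ^ 2 from funext hg]
    exact hA.norm_sq
  have hslope : (2 • innerSL ℝ v ∘L A) (-A v) = -2 * ‖A v‖ ^ 2 := by
    calc (2 • innerSL ℝ v ∘L A) (-A v) = -2 * ⟪v, A (A v)⟫_ℝ := by simp
      _ = -2 * ‖A v‖ ^ 2 := by
        rw [← inner_fderiv_gradient_comm hL.contDiffAt, real_inner_self_eq_norm_sq]
  have hdecay := hg'.isLittleO_comp (by simpa using (tendsto_id (x := 𝓝 (0:ℝ))).pow 2) hstep
  have hneg : ∀ᶠ η in 𝓝[>] 0, g (G η θ) - g θ < 0 := by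
    refine eventually_neg_of_isLittleO_sub_mul (c := -2 * ‖A v‖ ^ 2)
      (mul_neg_of_neg_of_pos (by norm_num) (pow_pos (norm_pos_iff.mpr hθ) 2)) ?_
      ((hdecay.mono nhdsWithin_le_nhds).congr_left ?_)
    · filter_upwards [self_mem_nhdsWithin] with η hη using pow_pos hη 2
    · intro η; rw [hslope, smul_eq_mul]
  obtain ⟨η₀, hη₀, hsub⟩ := mem_nhdsGT_iff_exists_Ioo_subset.mp hneg
  exact ⟨η₀, hη₀, fun η h0 h1 => sub_neg.mp (hsub ⟨h0, h1⟩)⟩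
end
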